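/- Let Z ∈ ℝ^{r×n} and J = I_n − (1/n)·1_n 1_nᵀ. Suppose Z J Zᵀ = N ∇ Nᵀ with ∇ ∈ ℝ^{r×r} diagonal and positive definite and N ∈ ℝ^{r×r} orthogonal (full-rank case r' = r). Define K = J Zᵀ N ∇^{−1/2} and V̂ = √n · N Kᵀ. Then V̂ satisfies V̂ V̂ᵀ = n I_r and V̂ 1_n = 0, and V̂ maximizes tr(Z Vᵀ) over all V ∈ ℝ^{r×n} with V Vᵀ = n I_r and V 1_n = 0. -/

import Mathlib

/-!
Put `Y = Z * J`. A feasible `V` has rows summing to zero, so `V * J = V` and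
`tr (Z Vᵀ) = tr (Y Vᵀ)`, while `V̂ = √n • C` with `C = (Y Yᵀ)^(-1/2) Y`. In the eigenbasis `N`,
`tr (Y Vᵀ) = ∑ i, √(d i) * ⟪(Nᵀ C)ᵢ, (Nᵀ V)ᵢ⟫`; the rows of `Nᵀ C` are orthonormal and those of
`Nᵀ V` have norm `√n`, so Cauchy–Schwarz bounds every term by `√(n d i)`, with equality for
`V = V̂`.
-/

open Matrix

section Centering

variable {R : Type*} [Field R] {ι m m' : Type*} [Fintype ι] [DecidableEq ι]

variable (R ι) in
def centeringMatrix : Matrix ι ι R := 1 - (Fintype.card ι : R)⁻¹ • of fun _ _ => 1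

theorem centeringMatrix_fin (n : ℕ) :
    centeringMatrix R (Fin n) = 1 - (n : R)⁻¹ • of fun _ _ => 1 := by
  simp [centeringMatrix]

theorem transpose_centeringMatrix : (centeringMatrix R ι)ᵀ = centeringMatrix R ι := by
  ext i j
  simp [centeringMatrix, one_apply, eq_comm]

theorem centeringMatrix_mulVec_one [CharZero R] : centeringMatrix R ι *ᵥ (fun _ => 1) = 0 := by
  ext i
  have : Nonempty ι := ⟨i⟩
  have : (Fintype.card ι : R) ≠ 0 := Nat.cast_ne_zero.mpr Fintype.card_ne_zero
  simp [centeringMatrix, mulVec, dotProduct, one_apply, this]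

theorem mul_centeringMatrix_of_mulVec_one {A : Matrix m ι R}
    (hA : A *ᵥ (fun _ => 1) = 0) : A * centeringMatrix R ι = A := by
  have hrow : ∀ i, ∑ k, A i k = 0 := fun i => by simpa [mulVec, dotProduct] using congrFun hA i
  ext i j
  simp [centeringMatrix, mul_sub, mul_apply, one_apply, ← Finset.sum_mul, hrow]

theorem centeringMatrix_mul_self [CharZero R] :
    centeringMatrix R ι * centeringMatrix R ι = centeringMatrix R ι :=
  mul_centeringMatrix_of_mulVec_one centeringMatrix_mulVec_one

theorem mul_centeringMatrix_mul_transpose_of_mulVec_one (A : Matrix m ι R) {B : Matrix m' ι R}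
    (hB : B *ᵥ (fun _ => 1) = 0) : A * centeringMatrix R ι * Bᵀ = A * Bᵀ := by
  rw [Matrix.mul_assoc, ← transpose_centeringMatrix, ← transpose_mul,
    mul_centeringMatrix_of_mulVec_one hB]

end Centering

theorem trace_diagonal_mul_mul_transpose_le {m ι : Type*} [Fintype m] [DecidableEq m]
    [Fintype ι] {s : m → ℝ} (hs : 0 ≤ s) {P W : Matrix m ι ℝ}
    {c : ℝ} (hP : P * Pᵀ = 1) (hW : W * Wᵀ = c • 1) :
    trace (diagonal s * P * Wᵀ) ≤ trace (diagonal s * P * (√c • P)ᵀ) := by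
  have hrow : ∀ i, (P * Wᵀ) i i ≤ √c := fun i => by
    have hPi : ∑ k, P i k ^ 2 = 1 := by simpa [mul_apply, sq] using congr_fun₂ hP i i
    have hWi : ∑ k, W i k ^ 2 = c := by simpa [mul_apply, sq] using congr_fun₂ hW i i
    simpa [mul_apply, hPi, hWi] using Real.sum_mul_le_sqrt_mul_sqrt Finset.univ (P i) (W i)
  calc trace (diagonal s * P * Wᵀ) = ∑ i, s i * (P * Wᵀ) i i := by
        simp only [Matrix.mul_assoc, trace, diag_apply, diagonal_mul]
    _ ≤ ∑ i, s i * √c := Finset.sum_le_sum fun i _ => mul_le_mul_of_nonneg_left (hrow i) (hs i)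
    _ = trace (diagonal s * P * (√c • P)ᵀ) := by
        rw [transpose_smul, Matrix.mul_smul, trace_smul, Matrix.mul_assoc, hP, Matrix.mul_one,
          trace_diagonal, smul_eq_mul, Finset.mul_sum]
        simp only [mul_comm]

theorem trace_mul_mul_transpose_mul_mul_transpose {R m ι : Type*} [CommRing R] [Fintype m]
    [Fintype ι] (N A : Matrix m m R) (B C : Matrix m ι R) :
    trace (N * A * Nᵀ * B * Cᵀ) = trace (A * (Nᵀ * B) * (Nᵀ * C)ᵀ) := by
  rw [Matrix.mul_assoc, Matrix.mul_assoc, Matrix.mul_assoc, trace_mul_comm]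
  simp only [transpose_mul, transpose_transpose, Matrix.mul_assoc]

section Whitening

variable {m ι : Type*} [Fintype m] [DecidableEq m] {N : Matrix m m ℝ} {d : m → ℝ}

/-- When `Y * Yᵀ = N * diagonal d * Nᵀ` with `N` orthogonal and `d > 0`, this is
`(Y * Yᵀ)^(-1/2) * Y`. -/
noncomputable def whiten (N : Matrix m m ℝ) (d : m → ℝ) (Y : Matrix m ι ℝ) : Matrix m ι ℝ :=
  N * diagonal (fun i => (√(d i))⁻¹) * Nᵀ * Y

theorem mul_mul_transpose_mul_mul_mul_transpose (hN' : Nᵀ * N = 1) (A B : Matrix m m ℝ) :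
    N * A * Nᵀ * (N * B * Nᵀ) = N * (A * B) * Nᵀ := by
  simp only [← Matrix.mul_assoc, Matrix.mul_assoc _ Nᵀ N, hN', Matrix.mul_one]

theorem whiten_mul_transpose [Fintype ι] (hN : N * Nᵀ = 1) (hN' : Nᵀ * N = 1)
    (hd : ∀ i, 0 < d i) {Y : Matrix m ι ℝ} (hY : Y * Yᵀ = N * diagonal d * Nᵀ) :
    whiten N d Y * (whiten N d Y)ᵀ = 1 := by
  set Si := diagonal fun i => (√(d i))⁻¹
  have hSi : Si * diagonal d * Si = 1 := by
    rw [diagonal_mul_diagonal, diagonal_mul_diagonal, ← diagonal_one]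
    congr 1; funext i
    have := Real.mul_self_sqrt (hd i).le
    have := Real.sqrt_pos.mpr (hd i)
    field_simp
    linarith
  calc _ = N * Si * Nᵀ * (Y * Yᵀ) * (N * Si * Nᵀ) := by
        simp only [whiten, transpose_mul, transpose_transpose, Si, diagonal_transpose,
          Matrix.mul_assoc]
    _ = 1 := by
        rw [hY, mul_mul_transpose_mul_mul_mul_transpose hN',
          mul_mul_transpose_mul_mul_mul_transpose hN', hSi, Matrix.mul_one, hN]

theorem sqrt_mul_whiten (hN : N * Nᵀ = 1) (hN' : Nᵀ * N = 1) (hd : ∀ i, 0 < d i)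
    (Y : Matrix m ι ℝ) : N * diagonal (fun i => √(d i)) * Nᵀ * whiten N d Y = Y := by
  have hS : diagonal (fun i => √(d i)) * diagonal (fun i => (√(d i))⁻¹) = 1 := by
    rw [diagonal_mul_diagonal, ← diagonal_one]
    congr 1; funext i
    exact mul_inv_cancel₀ (Real.sqrt_pos.mpr (hd i)).ne'
  rw [whiten, ← Matrix.mul_assoc, mul_mul_transpose_mul_mul_mul_transpose hN', hS,
    Matrix.mul_one, hN, Matrix.one_mul]

theorem trace_mul_transpose_le_trace_mul_transpose_whiten [Fintype ι] (hN : N * Nᵀ = 1)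
    (hN' : Nᵀ * N = 1) (hd : ∀ i, 0 < d i) {Y : Matrix m ι ℝ}
    (hY : Y * Yᵀ = N * diagonal d * Nᵀ) {W : Matrix m ι ℝ} {c : ℝ} (hW : W * Wᵀ = c • 1) :
    trace (Y * Wᵀ) ≤ trace (Y * (√c • whiten N d Y)ᵀ) := by
  have hP : (Nᵀ * whiten N d Y) * (Nᵀ * whiten N d Y)ᵀ = 1 := by
    rw [transpose_mul, transpose_transpose, Matrix.mul_assoc, ← Matrix.mul_assoc (whiten N d Y),
      whiten_mul_transpose hN hN' hd hY, Matrix.one_mul, hN']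
  have hW' : (Nᵀ * W) * (Nᵀ * W)ᵀ = c • 1 := by
    rw [transpose_mul, transpose_transpose, Matrix.mul_assoc, ← Matrix.mul_assoc W, hW,
      Matrix.smul_mul, Matrix.one_mul, Matrix.mul_smul, hN']
  rw [← sqrt_mul_whiten hN hN' hd Y, trace_mul_mul_transpose_mul_mul_transpose,
    trace_mul_mul_transpose_mul_mul_transpose, Matrix.mul_smul, sqrt_mul_whiten hN hN' hd Y]
  exact trace_diagonal_mul_mul_transpose_le (fun i => Real.sqrt_nonneg _) hP hW'

end Whitening

theorem stmt_6_general {r n : ℕ} (Z : Matrix (Fin r) (Fin n) ℝ)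
    (J : Matrix (Fin n) (Fin n) ℝ)
    (hJ : J = 1 - (n : ℝ)⁻¹ • (Matrix.of fun _ _ => (1 : ℝ)))
    (N : Matrix (Fin r) (Fin r) ℝ) (hN : N * Nᵀ = 1)
    (d : Fin r → ℝ) (hd : ∀ i, 0 < d i)
    (hZ : Z * J * Zᵀ = N * Matrix.diagonal d * Nᵀ)
    (K : Matrix (Fin n) (Fin r) ℝ)
    (hK : K = J * Zᵀ * N * Matrix.diagonal (fun i => (Real.sqrt (d i))⁻¹))
    (Vhat : Matrix (Fin r) (Fin n) ℝ) (hVhat : Vhat = Real.sqrt n • (N * Kᵀ)) :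
    Vhat * Vhatᵀ = (n : ℝ) • (1 : Matrix (Fin r) (Fin r) ℝ) ∧
      Vhat *ᵥ (fun _ => (1 : ℝ)) = 0 ∧
      ∀ V : Matrix (Fin r) (Fin n) ℝ,
        V * Vᵀ = (n : ℝ) • (1 : Matrix (Fin r) (Fin r) ℝ) →
        V *ᵥ (fun _ => (1 : ℝ)) = 0 →
        Matrix.trace (Z * Vᵀ) ≤ Matrix.trace (Z * Vhatᵀ) := by
  have hN' : Nᵀ * N = 1 := mul_eq_one_comm.mp hN
  rw [← centeringMatrix_fin] at hJ
  subst hJ hVhat hK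
  have hY : Z * centeringMatrix ℝ (Fin n) * (Z * centeringMatrix ℝ (Fin n))ᵀ =
      N * diagonal d * Nᵀ := by
    rw [transpose_mul, transpose_centeringMatrix, Matrix.mul_assoc, ← Matrix.mul_assoc _ _ Zᵀ,
      centeringMatrix_mul_self, ← Matrix.mul_assoc, hZ]
  have hVhat : N * (centeringMatrix ℝ (Fin n) * Zᵀ * N * diagonal fun i => (√(d i))⁻¹)ᵀ =
      whiten N d (Z * centeringMatrix ℝ (Fin n)) := by
    simp only [whiten, transpose_mul, transpose_transpose, diagonal_transpose,
      transpose_centeringMatrix, Matrix.mul_assoc]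
  have hVhat1 : (√n • whiten N d (Z * centeringMatrix ℝ (Fin n))) *ᵥ (fun _ => 1) = 0 := by
    rw [smul_mulVec, whiten, ← Matrix.mul_assoc, ← mulVec_mulVec, centeringMatrix_mulVec_one,
      mulVec_zero, smul_zero]
  rw [hVhat]
  refine ⟨?_, hVhat1, fun V hVV hV1 => ?_⟩
  · rw [transpose_smul, Matrix.smul_mul, Matrix.mul_smul, whiten_mul_transpose hN hN' hd hY,
      smul_smul, Real.mul_self_sqrt n.cast_nonneg]
  · rw [← mul_centeringMatrix_mul_transpose_of_mulVec_one Z hV1,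
      ← mul_centeringMatrix_mul_transpose_of_mulVec_one Z hVhat1]
    exact trace_mul_transpose_le_trace_mul_transpose_whiten hN hN' hd hY hVV

/-- Theorem 3.1, full-rank case: with J = I − (1/n)11ᵀ, eigendecomposition
Z J Zᵀ = N ∇ Nᵀ (∇ positive diagonal, N orthogonal), K = J Zᵀ N ∇^{−1/2} and
V̂ = √n · N Kᵀ, the matrix V̂ satisfies V̂ V̂ᵀ = n I_r, V̂ 1_n = 0 and maximizes
tr(Z Vᵀ) over all V with V Vᵀ = n I_r and V 1_n = 0. -/
theorem stmt_6 {r n : ℕ} (hn : 0 < n) (Z : Matrix (Fin r) (Fin n) ℝ)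
    (J : Matrix (Fin n) (Fin n) ℝ)
    (hJ : J = 1 - (n : ℝ)⁻¹ • (Matrix.of fun _ _ => (1 : ℝ)))
    (N : Matrix (Fin r) (Fin r) ℝ) (hN : N * Nᵀ = 1) (hN' : Nᵀ * N = 1)
    (d : Fin r → ℝ) (hd : ∀ i, 0 < d i)
    (hZ : Z * J * Zᵀ = N * Matrix.diagonal d * Nᵀ)
    (K : Matrix (Fin n) (Fin r) ℝ)
    (hK : K = J * Zᵀ * N * Matrix.diagonal (fun i => (Real.sqrt (d i))⁻¹))
    (Vhat : Matrix (Fin r) (Fin n) ℝ) (hVhat : Vhat = Real.sqrt n • (N * Kᵀ)) :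
    Vhat * Vhatᵀ = (n : ℝ) • (1 : Matrix (Fin r) (Fin r) ℝ) ∧
      Vhat *ᵥ (fun _ => (1 : ℝ)) = 0 ∧
      ∀ V : Matrix (Fin r) (Fin n) ℝ,
        V * Vᵀ = (n : ℝ) • (1 : Matrix (Fin r) (Fin r) ℝ) →
        V *ᵥ (fun _ => (1 : ℝ)) = 0 →
        Matrix.trace (Z * Vᵀ) ≤ Matrix.trace (Z * Vhatᵀ) :=
  stmt_6_general Z J hJ N hN d hd hZ K hK Vhat hVhat
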